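/- Assume (B1)–(B3), that F := {z ∈ H : g(z) ∈ −K} is nonempty, and let λ > 0, σ ∈ (0, 1/√2], c̃ > 0, an integer k₀ ≥ 0, z_{k₀} ∈ H, p_{k₀} ∈ ℝ^ℓ. For j = k₀+1, ..., k with k ≥ k₀+2, suppose (z_j, v_j, ε_j) satisfies the prox condition with data (λ, σ, c̃, z_{j-1}, p_{j-1}), p_j := Π_{K*}(p_{j-1} + c̃ g(z_j)), r_j := v_j + z_{j-1} − z_j, and suppose ‖p_j‖ ≤ C for all j = k₀, ..., k for some C ≥ 0. Define Δ_k := [L_{c̃}(z_{k₀+1};p_{k₀+1}) − L_{c̃}(z_k;p_k)]/(k − k₀ − 1). Then: (i) min_{k₀+2 ≤ j ≤ k} ‖r_j‖² ≤ (2λ/(1−σ²))·(Δ_k + 4C²/c̃); and (ii) Δ_k ≤ (R_φ + 9C²/(2c̃))/(k − k₀ − 1), where R_φ := φ* − φ_* + D_h²/λ with φ* := inf{f(u)+h(u) : u ∈ F} and φ_* := inf{f(u)+h(u) : u ∈ ℝ^n}. -/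

import Mathlib

/-!
Each inexact proximal step decreases `λ L_c̃(·; p_{j-1})` by at least `(1 - σ²)/2 · ‖r_j‖²`
(take `z' = z_{j-1}` in the ε-subgradient inequality), while the multiplier update raises
`L_c̃(z_j; ·)` by at most `‖p_j - p_{j-1}‖² / c̃ ≤ 4C²/c̃`: by the Moreau decomposition
`q = Π_{K*}(q) + Π_{-K}(q)` one has `dist(q, -K) = ‖Π_{K*}(q)‖`. Telescoping over the cycle
bounds the smallest residual by the average decrease, which is (i). For (ii), the first step
compares `z_{k₀+1}` with an arbitrary feasible `u`, where `L_c̃(u; p) ≤ f(u) + h(u)`, and at the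
end `L_c̃(z_k; p_k) ≥ f(z_k) + h(z_k) - C²/(2c̃) ≥ φ_* - C²/(2c̃)`.
-/

open RealInnerProductSpace Pointwise

/-- The dual cone of a set in a real inner product space. -/
def dualCone {F : Type*} [NormedAddCommGroup F] [InnerProductSpace ℝ F] (K : Set F) : Set F :=
  {y | ∀ x ∈ K, 0 ≤ ⟪y, x⟫}

/-- `p` is the Euclidean projection of `x` onto `S`. -/
def IsProjOn {F : Type*} [NormedAddCommGroup F] [InnerProductSpace ℝ F]
    (S : Set F) (x p : F) : Prop :=
  p ∈ S ∧ ∀ y ∈ S, dist x p ≤ dist x y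

/-- `g` is `K`-convex. -/
def KConvex {E F : Type*} [NormedAddCommGroup E] [InnerProductSpace ℝ E]
    [NormedAddCommGroup F] [InnerProductSpace ℝ F] (K : Set F) (g : E → F) : Prop :=
  ∀ z z' : E, ∀ t : ℝ, t ∈ Set.Icc (0 : ℝ) 1 →
    g (t • z' + (1 - t) • z) - t • g z' - (1 - t) • g z ∈ -K

/-- The ε-subdifferential at `z` of a proper extended-real-valued function represented by
its effective domain `D` and its real values `ψ` on `D` (the function equals `+∞` off `D`). -/
def epsSubdiff {E : Type*} [NormedAddCommGroup E] [InnerProductSpace ℝ E]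
    (D : Set E) (ψ : E → ℝ) (ε : ℝ) (z : E) : Set E :=
  {u | ∀ z' ∈ D, ψ z + ⟪u, z' - z⟫ - ε ≤ ψ z'}

/-- The augmented Lagrangian `L_c(z;p)`; the proper closed convex function `h` is represented
by its real values on its effective domain `H`. -/
noncomputable def AugLag {E F : Type*} [NormedAddCommGroup E] [InnerProductSpace ℝ E]
    [NormedAddCommGroup F] [InnerProductSpace ℝ F]
    (K : Set F) (f h : E → ℝ) (g : E → F) (c : ℝ) (z : E) (p : F) : ℝ :=
  f z + h z + (1 / (2 * c)) * ((Metric.infDist (p + c • g z) (-K)) ^ 2 - ‖p‖ ^ 2)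

section DualCone

variable {F : Type*} [NormedAddCommGroup F] [InnerProductSpace ℝ F]

theorem zero_mem_of_isClosed_of_smul_mem {K : Set F} (hKne : K.Nonempty) (hKcl : IsClosed K)
    (hKcone : ∀ t : ℝ, 0 < t → ∀ x ∈ K, t • x ∈ K) : (0 : F) ∈ K := by
  obtain ⟨x, hx⟩ := hKne
  have hlim : Filter.Tendsto (fun t : ℝ => t • x) (nhdsWithin 0 (Set.Ioi 0)) (nhds 0) :=
    tendsto_nhdsWithin_of_tendsto_nhds
      ((continuous_id.smul continuous_const).tendsto' 0 0 (zero_smul ℝ x))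
  exact hKcl.mem_of_tendsto hlim (eventually_nhdsWithin_of_forall fun t ht => hKcone t ht x hx)

theorem exists_properCone_coe_eq {K : Set F} (hKne : K.Nonempty) (hKcl : IsClosed K)
    (hKcvx : Convex ℝ K) (hKcone : ∀ t : ℝ, 0 < t → ∀ x ∈ K, t • x ∈ K) :
    ∃ C : ProperCone ℝ F, (C : Set F) = K := by
  have hsmul : ∀ t : ℝ, 0 ≤ t → ∀ x ∈ K, t • x ∈ K := fun t ht x hx => by
    rcases ht.eq_or_lt with rfl | ht
    · rw [zero_smul]
      exact zero_mem_of_isClosed_of_smul_mem hKne hKcl hKcone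
    · exact hKcone t ht x hx
  refine ⟨⟨PointedCone.ofConeComb K hKne fun x hx y hy a ha b hb => ?_, hKcl⟩, rfl⟩
  have hmid := hKcvx (hsmul a ha x hx) (hsmul b hb y hy) (by norm_num : (0 : ℝ) ≤ 1 / 2)
    (by norm_num : (0 : ℝ) ≤ 1 / 2) (by norm_num)
  have hdouble : (2 : ℝ) • ((1 / 2 : ℝ) • a • x + (1 / 2 : ℝ) • b • y) = a • x + b • y := by
    rw [← smul_add, smul_smul]
    norm_num
  exact hdouble ▸ hKcone 2 two_pos _ hmid

theorem coe_innerDual_eq_dualCone [CompleteSpace F] (K : Set F) :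
    (ProperCone.innerDual K : Set F) = dualCone K := by
  ext y
  simp [dualCone, real_inner_comm y]

theorem dualCone_dualCone [CompleteSpace F] {K : Set F} (hKne : K.Nonempty) (hKcl : IsClosed K)
    (hKcvx : Convex ℝ K) (hKcone : ∀ t : ℝ, 0 < t → ∀ x ∈ K, t • x ∈ K) :
    dualCone (dualCone K) = K := by
  obtain ⟨C, rfl⟩ := exists_properCone_coe_eq hKne hKcl hKcvx hKcone
  rw [← coe_innerDual_eq_dualCone, ← coe_innerDual_eq_dualCone, ProperCone.innerDual_innerDual]

end DualCone

namespace IsProjOn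

variable {F : Type*} [NormedAddCommGroup F] [InnerProductSpace ℝ F] {S : Set F} {x p : F}

theorem inner_sub_le_zero (hS : Convex ℝ S) (hp : IsProjOn S x p) {y : F} (hy : y ∈ S) :
    ⟪x - p, y - p⟫ ≤ 0 := by
  have : Nonempty S := ⟨⟨p, hp.1⟩⟩
  refine (norm_eq_iInf_iff_real_inner_le_zero hS hp.1).1 (le_antisymm ?_ ?_) y hy
  · exact le_ciInf fun w => by simpa only [dist_eq_norm] using hp.2 w w.2
  · exact ciInf_le (f := fun w : S => ‖x - w‖)
      ⟨0, Set.forall_mem_range.2 fun _ => norm_nonneg _⟩ ⟨p, hp.1⟩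

variable [CompleteSpace F] {K : Set F} {q : F}

theorem inner_le_zero_of_mem_dualCone (hp : IsProjOn (dualCone K) q p) {y : F}
    (hy : y ∈ dualCone K) : ⟪q - p, y⟫ ≤ 0 := by
  rw [← coe_innerDual_eq_dualCone] at hp hy
  simpa using hp.inner_sub_le_zero (ProperCone.innerDual K).convex (add_mem hy hp.1)

theorem inner_sub_self_eq_zero (hp : IsProjOn (dualCone K) q p) : ⟪q - p, p⟫ = 0 := by
  refine le_antisymm (hp.inner_le_zero_of_mem_dualCone hp.1) ?_
  rw [← coe_innerDual_eq_dualCone] at hp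
  simpa using hp.inner_sub_le_zero (ProperCone.innerDual K).convex (zero_mem _)

theorem sub_mem_neg (hKne : K.Nonempty) (hKcl : IsClosed K) (hKcvx : Convex ℝ K)
    (hKcone : ∀ t : ℝ, 0 < t → ∀ x ∈ K, t • x ∈ K) (hp : IsProjOn (dualCone K) q p) :
    q - p ∈ -K := by
  rw [Set.mem_neg, neg_sub, ← dualCone_dualCone hKne hKcl hKcvx hKcone]
  intro y hy
  rw [← neg_sub, inner_neg_left, neg_nonneg]
  exact hp.inner_le_zero_of_mem_dualCone hy

theorem infDist_neg_eq_norm (hKne : K.Nonempty) (hKcl : IsClosed K) (hKcvx : Convex ℝ K)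
    (hKcone : ∀ t : ℝ, 0 < t → ∀ x ∈ K, t • x ∈ K) (hp : IsProjOn (dualCone K) q p) :
    Metric.infDist q (-K) = ‖p‖ := by
  have hmem := hp.sub_mem_neg hKne hKcl hKcvx hKcone
  refine le_antisymm ?_ ((Metric.le_infDist ⟨_, hmem⟩).2 fun w hw => ?_)
  · simpa using Metric.infDist_le_dist_of_mem (x := q) hmem
  have hpw : ⟪p, w⟫ ≤ 0 := by simpa [inner_neg_right] using hp.1 (-w) hw
  have hpq : ⟪p, q⟫ = ‖p‖ ^ 2 := by
    have := hp.inner_sub_self_eq_zero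
    rw [inner_sub_left, real_inner_self_eq_norm_sq, real_inner_comm] at this
    linarith
  have hcs : ‖p‖ ^ 2 ≤ ‖p‖ * ‖q - w‖ := by
    calc ‖p‖ ^ 2 ≤ ⟪p, q - w⟫ := by rw [inner_sub_right]; linarith
      _ ≤ ‖p‖ * ‖q - w‖ := real_inner_le_norm p (q - w)
  rw [dist_eq_norm]
  nlinarith [norm_nonneg p, norm_nonneg (q - w)]

end IsProjOn

section AugLag

variable {E F : Type*} [NormedAddCommGroup E] [InnerProductSpace ℝ E]
  [NormedAddCommGroup F] [InnerProductSpace ℝ F] {K : Set F} {f h : E → ℝ} {g : E → F} {c C : ℝ}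

theorem sub_le_augLag (hc : 0 ≤ c) (z : E) {p : F} (hpC : ‖p‖ ≤ C) :
    f z + h z - C ^ 2 / (2 * c) ≤ AugLag K f h g c z p := by
  have hp : ‖p‖ ^ 2 ≤ C ^ 2 := pow_le_pow_left₀ (norm_nonneg p) hpC 2
  have : 0 ≤ 1 / (2 * c) * Metric.infDist (p + c • g z) (-K) ^ 2 := by positivity
  have : 1 / (2 * c) * ‖p‖ ^ 2 ≤ C ^ 2 / (2 * c) := by
    rw [one_div_mul_eq_div]
    gcongr
  rw [AugLag, mul_sub]
  linarith

theorem augLag_le_of_smul_mem (hc : 0 ≤ c) {u : E} (hu : c • g u ∈ -K) (p : F) :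
    AugLag K f h g c u p ≤ f u + h u := by
  have hd : Metric.infDist (p + c • g u) (-K) ≤ ‖p‖ := by
    simpa using Metric.infDist_le_dist_of_mem (x := p + c • g u) hu
  have : Metric.infDist (p + c • g u) (-K) ^ 2 - ‖p‖ ^ 2 ≤ 0 := by
    nlinarith [Metric.infDist_nonneg (x := p + c • g u) (s := -K)]
  have := mul_nonpos_of_nonneg_of_nonpos (by positivity : 0 ≤ 1 / (2 * c)) this
  rw [AugLag]
  linarith

variable [CompleteSpace F]

theorem augLag_le_of_isProjOn (hKne : K.Nonempty) (hKcl : IsClosed K) (hKcvx : Convex ℝ K)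
    (hKcone : ∀ t : ℝ, 0 < t → ∀ x ∈ K, t • x ∈ K) (hc : 0 ≤ c) {z : E} {p₀ p : F}
    (hp : IsProjOn (dualCone K) (p₀ + c • g z) p) :
    AugLag K f h g c z p ≤ AugLag K f h g c z p₀ + ‖p - p₀‖ ^ 2 / c := by
  have hq := hp.infDist_neg_eq_norm hKne hKcl hKcvx hKcone
  have hd : Metric.infDist (p + c • g z) (-K) ≤ ‖p + (p - p₀)‖ := by
    have := Metric.infDist_le_dist_of_mem (x := p + c • g z)
      (hp.sub_mem_neg hKne hKcl hKcvx hKcone)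
    rwa [dist_eq_norm, show p + c • g z - (p₀ + c • g z - p) = p + (p - p₀) by abel] at this
  have hpar := parallelogram_law_with_norm ℝ p (p - p₀)
  rw [sub_sub_cancel] at hpar
  have hsq : Metric.infDist (p + c • g z) (-K) ^ 2 - ‖p‖ ^ 2
      ≤ Metric.infDist (p₀ + c • g z) (-K) ^ 2 - ‖p₀‖ ^ 2 + 2 * ‖p - p₀‖ ^ 2 := by
    rw [hq]
    nlinarith [Metric.infDist_nonneg (x := p + c • g z) (s := -K)]
  have := mul_le_mul_of_nonneg_left hsq (by positivity : 0 ≤ 1 / (2 * c))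
  rw [AugLag, AugLag]
  linarith [show 1 / (2 * c) * (2 * ‖p - p₀‖ ^ 2) = ‖p - p₀‖ ^ 2 / c by ring]

theorem augLag_le_add_of_isProjOn (hKne : K.Nonempty) (hKcl : IsClosed K)
    (hKcvx : Convex ℝ K) (hKcone : ∀ t : ℝ, 0 < t → ∀ x ∈ K, t • x ∈ K) (hc : 0 ≤ c)
    {z : E} {p₀ p : F}
    (hp : IsProjOn (dualCone K) (p₀ + c • g z) p) (hp₀C : ‖p₀‖ ≤ C) (hpC : ‖p‖ ≤ C) :
    AugLag K f h g c z p ≤ AugLag K f h g c z p₀ + 4 * C ^ 2 / c := by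
  have hdiff : ‖p - p₀‖ ^ 2 ≤ (2 * C) ^ 2 :=
    pow_le_pow_left₀ (norm_nonneg _) ((norm_sub_le p p₀).trans (by linarith)) 2
  have : ‖p - p₀‖ ^ 2 / c ≤ 4 * C ^ 2 / c := by
    gcongr
    linarith
  linarith [augLag_le_of_isProjOn hKne hKcl hKcvx hKcone (f := f) (h := h) hc hp]

end AugLag

section Prox

variable {E : Type*} [NormedAddCommGroup E] [InnerProductSpace ℝ E] {D : Set E} {ψ : E → ℝ}
  {z₀ z v : E} {ε σ : ℝ}

theorem prox_descent_of_mem_epsSubdiff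
    (hv : v ∈ epsSubdiff D (fun u => ψ u + 1 / 2 * ‖u - z₀‖ ^ 2) ε z)
    (hvσ : ‖v‖ ^ 2 + 2 * ε ≤ σ ^ 2 * ‖v + z₀ - z‖ ^ 2) (hz₀ : z₀ ∈ D) :
    ψ z + (1 - σ ^ 2) / 2 * ‖v + z₀ - z‖ ^ 2 ≤ ψ z₀ := by
  have hsub := hv z₀ hz₀
  simp only [sub_self, norm_zero] at hsub
  have hr : ‖v + (z₀ - z)‖ ^ 2 = ‖v‖ ^ 2 + 2 * ⟪v, z₀ - z⟫ + ‖z₀ - z‖ ^ 2 := norm_add_sq_real _ _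
  rw [← add_sub_assoc] at hr
  rw [norm_sub_rev] at hsub
  linarith

theorem prox_le_add_sq_of_mem_epsSubdiff
    (hv : v ∈ epsSubdiff D (fun u => ψ u + 1 / 2 * ‖u - z₀‖ ^ 2) ε z)
    (hvσ : ‖v‖ ^ 2 + 2 * ε ≤ σ ^ 2 * ‖v + z₀ - z‖ ^ 2) (hσ : σ ^ 2 ≤ 1 / 2) (hε : 0 ≤ ε)
    {u : E} (hu : u ∈ D) : ψ z ≤ ψ u + ‖u - z₀‖ ^ 2 := by
  have hsub := hv u hu
  have hvσ' : ‖v‖ ^ 2 + 2 * ε ≤ 1 / 2 * ‖v - (z - z₀)‖ ^ 2 := by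
    rw [sub_sub_eq_add_sub]
    nlinarith [sq_nonneg ‖v + z₀ - z‖]
  have hr : ‖v - (z - z₀)‖ ^ 2 = ‖v‖ ^ 2 - 2 * ⟪v, z - z₀⟫ + ‖z - z₀‖ ^ 2 := norm_sub_sq_real _ _
  have hva : 0 ≤ ‖v + (u - z₀)‖ ^ 2 := sq_nonneg _
  rw [norm_add_sq_real] at hva
  have hinner : ⟪v, u - z⟫ = ⟪v, u - z₀⟫ - ⟪v, z - z₀⟫ := by
    rw [← inner_sub_right, sub_sub_sub_cancel_right]
  simp only at hsub
  linarith

end Prox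

theorem exists_le_avg_drop_of_descent {a b : ℕ → ℝ} {e : ℝ} {m n : ℕ} (hmn : m < n)
    (h : ∀ j, m ≤ j → j < n → a (j + 1) + b (j + 1) ≤ a j + e) :
    ∃ j, m ≤ j ∧ j < n ∧ b (j + 1) ≤ (a m - a n) / ((n : ℝ) - m) + e := by
  have hnm : (0 : ℝ) < (n : ℝ) - m := sub_pos.2 (Nat.cast_lt.2 hmn)
  have hsum : ∑ j ∈ Finset.Ico m n, b (j + 1)
      ≤ ∑ j ∈ Finset.Ico m n, ((a m - a n) / ((n : ℝ) - m) + e) := by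
    calc ∑ j ∈ Finset.Ico m n, b (j + 1)
        ≤ ∑ j ∈ Finset.Ico m n, (e - (a (j + 1) - a j)) :=
          Finset.sum_le_sum fun j hj => by
            rw [Finset.mem_Ico] at hj
            linarith [h j hj.1 hj.2]
      _ = ∑ j ∈ Finset.Ico m n, ((a m - a n) / ((n : ℝ) - m) + e) := by
          rw [Finset.sum_sub_distrib, Finset.sum_Ico_sub _ hmn.le, Finset.sum_const,
            Finset.sum_const, Nat.card_Ico, nsmul_eq_mul, nsmul_eq_mul, Nat.cast_sub hmn.le]
          field_simp
          ring
  obtain ⟨j, hj, hjb⟩ := Finset.exists_le_of_sum_le (Finset.nonempty_Ico.2 hmn) hsum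
  rw [Finset.mem_Ico] at hj
  exact ⟨j, hj.1, hj.2, hjb⟩

section ProxStep

variable {E F : Type*} [NormedAddCommGroup E] [InnerProductSpace ℝ E]
  [NormedAddCommGroup F] [InnerProductSpace ℝ F] [CompleteSpace F] {K : Set F} {f h : E → ℝ}
  {g : E → F} {D : Set E} {lam σ c ε C : ℝ} {z₀ z v : E} {p₀ p : F}

theorem augLag_descent_of_prox_step (hKne : K.Nonempty) (hKcl : IsClosed K)
    (hKcvx : Convex ℝ K) (hKcone : ∀ t : ℝ, 0 < t → ∀ x ∈ K, t • x ∈ K) (hlam : 0 < lam)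
    (hc : 0 ≤ c) (hz₀ : z₀ ∈ D)
    (hv : v ∈ epsSubdiff D (fun u => lam * AugLag K f h g c u p₀ + 1 / 2 * ‖u - z₀‖ ^ 2) ε z)
    (hvσ : ‖v‖ ^ 2 + 2 * ε ≤ σ ^ 2 * ‖v + z₀ - z‖ ^ 2)
    (hp : IsProjOn (dualCone K) (p₀ + c • g z) p) (hp₀C : ‖p₀‖ ≤ C) (hpC : ‖p‖ ≤ C) :
    AugLag K f h g c z p + (1 - σ ^ 2) / (2 * lam) * ‖v + z₀ - z‖ ^ 2
      ≤ AugLag K f h g c z₀ p₀ + 4 * C ^ 2 / c := by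
  have hprox := prox_descent_of_mem_epsSubdiff hv hvσ hz₀
  have hprox' : AugLag K f h g c z p₀ + (1 - σ ^ 2) / (2 * lam) * ‖v + z₀ - z‖ ^ 2
      ≤ AugLag K f h g c z₀ p₀ := by
    refine le_of_mul_le_mul_left ?_ hlam
    calc lam * (AugLag K f h g c z p₀ + (1 - σ ^ 2) / (2 * lam) * ‖v + z₀ - z‖ ^ 2)
        = lam * AugLag K f h g c z p₀ + (1 - σ ^ 2) / 2 * ‖v + z₀ - z‖ ^ 2 := by
          field_simp
      _ ≤ _ := hprox
  linarith [augLag_le_add_of_isProjOn hKne hKcl hKcvx hKcone (f := f) (h := h) hc hp hp₀C hpC]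

theorem augLag_le_of_prox_step_of_feasible (hKne : K.Nonempty) (hKcl : IsClosed K)
    (hKcvx : Convex ℝ K) (hKcone : ∀ t : ℝ, 0 < t → ∀ x ∈ K, t • x ∈ K) (hlam : 0 < lam)
    (hc : 0 ≤ c) (hσ : σ ^ 2 ≤ 1 / 2) (hε : 0 ≤ ε)
    (hv : v ∈ epsSubdiff D (fun u => lam * AugLag K f h g c u p₀ + 1 / 2 * ‖u - z₀‖ ^ 2) ε z)
    (hvσ : ‖v‖ ^ 2 + 2 * ε ≤ σ ^ 2 * ‖v + z₀ - z‖ ^ 2)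
    (hp : IsProjOn (dualCone K) (p₀ + c • g z) p) (hp₀C : ‖p₀‖ ≤ C) (hpC : ‖p‖ ≤ C)
    {u : E} (hu : u ∈ D) (hgu : c • g u ∈ -K) {Dh : ℝ} (huz₀ : ‖u - z₀‖ ≤ Dh) :
    AugLag K f h g c z p ≤ f u + h u + Dh ^ 2 / lam + 4 * C ^ 2 / c := by
  have hprox := prox_le_add_sq_of_mem_epsSubdiff hv hvσ hσ hε hu
  have hdist : ‖u - z₀‖ ^ 2 ≤ Dh ^ 2 := pow_le_pow_left₀ (norm_nonneg _) huz₀ 2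
  have hprox' : AugLag K f h g c z p₀ ≤ AugLag K f h g c u p₀ + Dh ^ 2 / lam := by
    rw [← sub_le_iff_le_add', le_div_iff₀ hlam]
    linarith
  linarith [augLag_le_add_of_isProjOn hKne hKcl hKcvx hKcone (f := f) (h := h) hc hp hp₀C hpC,
    augLag_le_of_smul_mem (f := f) (h := h) hc hgu p₀]

end ProxStep

theorem sq_div_sqrt_le_sq {σ L : ℝ} (hL : 1 ≤ L) : (σ / √L) ^ 2 ≤ σ ^ 2 := by
  rw [div_pow, Real.sq_sqrt (zero_le_one.trans hL)]
  exact div_le_self (sq_nonneg σ) hL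

theorem sub_le_csInf_sub_csInf {α : Type*} {φ : α → ℝ} {S T : Set α} (hS : S.Nonempty)
    (hT : BddBelow (φ '' T)) {A B a b : ℝ} (hA : ∀ u ∈ S, A ≤ φ u + a) {w : α} (hw : w ∈ T)
    (hB : φ w - b ≤ B) : A - B ≤ sInf (φ '' S) - sInf (φ '' T) + a + b := by
  have hAS : A - a ≤ sInf (φ '' S) :=
    le_csInf (hS.image φ) (by rintro _ ⟨u, hu, rfl⟩; linarith [hA u hu])
  linarith [csInf_le hT ⟨w, hw, rfl⟩]

theorem cycle_residual_bounds_general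
    {E F : Type*}
    [NormedAddCommGroup E] [InnerProductSpace ℝ E] [FiniteDimensional ℝ E]
    [NormedAddCommGroup F] [InnerProductSpace ℝ F] [FiniteDimensional ℝ F]
    -- K is a nonempty closed convex cone
    (K : Set F) (hKne : K.Nonempty) (hKcl : IsClosed K) (hKcvx : Convex ℝ K)
    (hKcone : ∀ t : ℝ, 0 < t → ∀ x ∈ K, t • x ∈ K)
    -- (B1): h proper closed convex, K_h-Lipschitz on its compact domain H of diameter ≤ Dh
    (H : Set E) (h : E → ℝ) (Kh Dh : ℝ)
    (hHcpt : IsCompact H)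
    (hhlip : ∀ x ∈ H, ∀ y ∈ H, |h x - h y| ≤ Kh * ‖x - y‖)
    (hDh : ∀ x ∈ H, ∀ y ∈ H, ‖x - y‖ ≤ Dh)
    -- (B2): f differentiable on H with lower curvature m_f and L_f-Lipschitz gradient
    (f : E → ℝ) (f' : E → E) (Lf : ℝ) (hLf : 0 < Lf)
    (hfdiff : ∀ z ∈ H, HasGradientAt f (f' z) z)
    -- (B3): g K-convex and differentiable with L_g-Lipschitz derivative
    (g : E → F) (Lg : ℝ) (hLg : 0 < Lg)
    -- bounds B_g⁽⁰⁾ and B_g⁽¹⁾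
    (Bg0 Bg1 : ℝ) (hBg0 : ∀ z ∈ H, ‖g z‖ ≤ Bg0)
    -- the feasible set is nonempty
    (hFne : {u | u ∈ H ∧ g u ∈ -K}.Nonempty)
    -- algorithm parameters
    (lam σ ct : ℝ) (hlam : 0 < lam) (hσ0 : 0 < σ) (hσ1 : σ ≤ 1 / Real.sqrt 2) (hct : 0 < ct)
    (k₀ k : ℕ) (hk : k₀ + 2 ≤ k)
    -- iterates
    (z : ℕ → E) (p : ℕ → F) (v : ℕ → E) (ε : ℕ → ℝ)
    (hzH : ∀ j : ℕ, k₀ ≤ j → j ≤ k → z j ∈ H)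
    (hε : ∀ j : ℕ, k₀ + 1 ≤ j → j ≤ k → 0 ≤ ε j)
    -- prox condition at every step j ∈ {k₀+1, …, k}, with data (λ, σ, c̃, z (j-1), p (j-1))
    (hv : ∀ j : ℕ, k₀ + 1 ≤ j → j ≤ k → v j ∈ epsSubdiff H
      (fun u => lam * AugLag K f h g ct u (p (j - 1)) + (1 / 2) * ‖u - z (j - 1)‖ ^ 2)
      (ε j) (z j))
    (hvineq : ∀ j : ℕ, k₀ + 1 ≤ j → j ≤ k → ‖v j‖ ^ 2 + 2 * ε j ≤
      (σ / Real.sqrt (lam * (Lf + Lg * ‖p (j - 1)‖ + ct * (Bg0 * Lg + Bg1 ^ 2)) + 1)) ^ 2 *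
        ‖v j + z (j - 1) - z j‖ ^ 2)
    -- multiplier update
    (hp : ∀ j : ℕ, k₀ + 1 ≤ j → j ≤ k →
      IsProjOn (dualCone K) (p (j - 1) + ct • g (z j)) (p j))
    -- boundedness of the multipliers
    (C : ℝ) (hpC : ∀ j : ℕ, k₀ ≤ j → j ≤ k → ‖p j‖ ≤ C)
    -- the quantities Δ_k and R_φ
    (Δ : ℝ) (hΔ : Δ = (AugLag K f h g ct (z (k₀ + 1)) (p (k₀ + 1))
      - AugLag K f h g ct (z k) (p k)) / ((k : ℝ) - (k₀ : ℝ) - 1))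
    (Rφ : ℝ) (hRφ : Rφ = sInf ((fun u => f u + h u) '' {u | u ∈ H ∧ g u ∈ -K})
      - sInf ((fun u => f u + h u) '' H) + Dh ^ 2 / lam) :
    -- conclusions
    (∃ j : ℕ, k₀ + 2 ≤ j ∧ j ≤ k ∧
      ‖v j + z (j - 1) - z j‖ ^ 2 ≤ (2 * lam / (1 - σ ^ 2)) * (Δ + 4 * C ^ 2 / ct)) ∧
    Δ ≤ (Rφ + 9 * C ^ 2 / (2 * ct)) / ((k : ℝ) - (k₀ : ℝ) - 1) := by
  have hσ : σ ^ 2 ≤ 1 / 2 := by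
    simpa [div_pow] using pow_le_pow_left₀ hσ0.le hσ1 2
  have hvσ : ∀ j, k₀ + 1 ≤ j → j ≤ k →
      ‖v j‖ ^ 2 + 2 * ε j ≤ σ ^ 2 * ‖v j + z (j - 1) - z j‖ ^ 2 := fun j hj₁ hj₂ => by
    have : 0 ≤ Bg0 := (norm_nonneg _).trans (hBg0 _ (hzH j (by omega) hj₂))
    refine (hvineq j hj₁ hj₂).trans
      (mul_le_mul_of_nonneg_right (sq_div_sqrt_le_sq ?_) (sq_nonneg _))
    exact le_add_of_nonneg_left (by positivity)
  refine ⟨?_, ?_⟩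
  · obtain ⟨j, hj₁, hj₂, hj⟩ := exists_le_avg_drop_of_descent
      (a := fun j => AugLag K f h g ct (z j) (p j))
      (b := fun j => (1 - σ ^ 2) / (2 * lam) * ‖v j + z (j - 1) - z j‖ ^ 2)
      (e := 4 * C ^ 2 / ct) (by omega : k₀ + 1 < k) fun j hj₁ hj₂ =>
        augLag_descent_of_prox_step hKne hKcl hKcvx hKcone hlam hct.le
          (hzH j (by omega) (by omega)) (hv (j + 1) (by omega) hj₂) (hvσ (j + 1) (by omega) hj₂)
          (hp (j + 1) (by omega) hj₂) (hpC j (by omega) (by omega)) (hpC (j + 1) (by omega) hj₂)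
    refine ⟨j + 1, by omega, hj₂, ?_⟩
    have h1σ : 0 < 1 - σ ^ 2 := by linarith
    rw [hΔ, sub_sub]
    push_cast at hj
    rw [Nat.add_sub_cancel]
    calc ‖v (j + 1) + z j - z (j + 1)‖ ^ 2
        = 2 * lam / (1 - σ ^ 2) * ((1 - σ ^ 2) / (2 * lam) * ‖v (j + 1) + z j - z (j + 1)‖ ^ 2) :=
          by field_simp
      _ ≤ _ := by gcongr
  · have hbdd : BddBelow ((fun u => f u + h u) '' H) :=
      hHcpt.bddBelow_image <| ContinuousOn.add
        (fun x hx => (hfdiff x hx).continuousAt.continuousWithinAt)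
        (LipschitzOnWith.of_dist_le'
          (by simpa [Real.dist_eq, dist_eq_norm] using hhlip)).continuousOn
    have hz₀ : z k₀ ∈ H := hzH k₀ le_rfl (by omega)
    have hstart : ∀ u ∈ {u | u ∈ H ∧ g u ∈ -K}, AugLag K f h g ct (z (k₀ + 1)) (p (k₀ + 1))
        ≤ f u + h u + (Dh ^ 2 / lam + 4 * C ^ 2 / ct) := fun u ⟨hu, hgu⟩ => by
      rw [← add_assoc]
      exact augLag_le_of_prox_step_of_feasible hKne hKcl hKcvx hKcone hlam hct.le hσ
        (hε _ le_rfl (by omega)) (hv _ le_rfl (by omega)) (hvσ _ le_rfl (by omega))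
        (hp _ le_rfl (by omega)) (hpC k₀ le_rfl (by omega)) (hpC _ (by omega) (by omega)) hu
        (by simpa [smul_neg] using hKcone ct hct _ hgu) (hDh u hu (z k₀) hz₀)
    have hend := sub_le_augLag (K := K) (f := f) (h := h) (g := g) hct.le (z k)
      (hpC k (by omega) le_rfl)
    have := sub_le_csInf_sub_csInf hFne hbdd hstart (hzH k (by omega) le_rfl) hend
    have hn : (0 : ℝ) < (k : ℝ) - (k₀ : ℝ) - 1 := by
      rw [sub_sub, sub_pos]
      exact_mod_cast hk
    rw [hRφ, le_div_iff₀ hn, hΔ, div_mul_cancel₀ _ hn.ne']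
    linarith [show 4 * C ^ 2 / ct + C ^ 2 / (2 * ct) = 9 * C ^ 2 / (2 * ct) by ring]

/-- bounds on the residuals and on the averaged augmented Lagrangian decrease
within a cycle of NL-IAPIAL (Lemma 4.6 of the paper).  Steps `j = k₀+1, …, k` all use the
same penalty parameter `c̃`. -/
theorem cycle_residual_bounds
    {E F : Type*}
    [NormedAddCommGroup E] [InnerProductSpace ℝ E] [FiniteDimensional ℝ E]
    [NormedAddCommGroup F] [InnerProductSpace ℝ F] [FiniteDimensional ℝ F]
    -- K is a nonempty closed convex cone
    (K : Set F) (hKne : K.Nonempty) (hKcl : IsClosed K) (hKcvx : Convex ℝ K)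
    (hKcone : ∀ t : ℝ, 0 < t → ∀ x ∈ K, t • x ∈ K)
    -- (B1): h proper closed convex, K_h-Lipschitz on its compact domain H of diameter ≤ Dh
    (H : Set E) (h : E → ℝ) (Kh Dh : ℝ) (hKh : 0 < Kh) (hDh0 : 0 < Dh)
    (hHne : H.Nonempty) (hHcpt : IsCompact H) (hHcvx : Convex ℝ H)
    (hhcvx : ConvexOn ℝ H h)
    (hhlip : ∀ x ∈ H, ∀ y ∈ H, |h x - h y| ≤ Kh * ‖x - y‖)
    (hDh : ∀ x ∈ H, ∀ y ∈ H, ‖x - y‖ ≤ Dh)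
    -- (B2): f differentiable on H with lower curvature m_f and L_f-Lipschitz gradient
    (f : E → ℝ) (f' : E → E) (mf Lf : ℝ) (hmf : 0 < mf) (hLf : 0 < Lf)
    (hfdiff : ∀ z ∈ H, HasGradientAt f (f' z) z)
    (hflow : ∀ z ∈ H, ∀ z' ∈ H, -(mf / 2) * ‖z' - z‖ ^ 2 ≤ f z' - f z - ⟪f' z, z' - z⟫)
    (hflip : ∀ z ∈ H, ∀ z' ∈ H, ‖f' z' - f' z‖ ≤ Lf * ‖z' - z‖)
    -- (B3): g K-convex and differentiable with L_g-Lipschitz derivative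
    (g : E → F) (g' : E → (E →L[ℝ] F)) (Lg : ℝ) (hLg : 0 < Lg)
    (hgdiff : ∀ z, HasFDerivAt g (g' z) z) (hgK : KConvex K g)
    (hglip : ∀ z z' : E, ‖g' z' - g' z‖ ≤ Lg * ‖z' - z‖)
    -- bounds B_g⁽⁰⁾ and B_g⁽¹⁾
    (Bg0 Bg1 : ℝ) (hBg0 : ∀ z ∈ H, ‖g z‖ ≤ Bg0) (hBg1 : ∀ z ∈ H, ‖g' z‖ ≤ Bg1)
    -- the feasible set is nonempty
    (hFne : {u | u ∈ H ∧ g u ∈ -K}.Nonempty)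
    -- algorithm parameters
    (lam σ ct : ℝ) (hlam : 0 < lam) (hσ0 : 0 < σ) (hσ1 : σ ≤ 1 / Real.sqrt 2) (hct : 0 < ct)
    (k₀ k : ℕ) (hk : k₀ + 2 ≤ k)
    -- iterates
    (z : ℕ → E) (p : ℕ → F) (v : ℕ → E) (ε : ℕ → ℝ)
    (hzH : ∀ j : ℕ, k₀ ≤ j → j ≤ k → z j ∈ H)
    (hε : ∀ j : ℕ, k₀ + 1 ≤ j → j ≤ k → 0 ≤ ε j)
    -- prox condition at every step j ∈ {k₀+1, …, k}, with data (λ, σ, c̃, z (j-1), p (j-1))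
    (hv : ∀ j : ℕ, k₀ + 1 ≤ j → j ≤ k → v j ∈ epsSubdiff H
      (fun u => lam * AugLag K f h g ct u (p (j - 1)) + (1 / 2) * ‖u - z (j - 1)‖ ^ 2)
      (ε j) (z j))
    (hvineq : ∀ j : ℕ, k₀ + 1 ≤ j → j ≤ k → ‖v j‖ ^ 2 + 2 * ε j ≤
      (σ / Real.sqrt (lam * (Lf + Lg * ‖p (j - 1)‖ + ct * (Bg0 * Lg + Bg1 ^ 2)) + 1)) ^ 2 *
        ‖v j + z (j - 1) - z j‖ ^ 2)
    -- multiplier update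
    (hp : ∀ j : ℕ, k₀ + 1 ≤ j → j ≤ k →
      IsProjOn (dualCone K) (p (j - 1) + ct • g (z j)) (p j))
    -- boundedness of the multipliers
    (C : ℝ) (hC : 0 ≤ C) (hpC : ∀ j : ℕ, k₀ ≤ j → j ≤ k → ‖p j‖ ≤ C)
    -- the quantities Δ_k and R_φ
    (Δ : ℝ) (hΔ : Δ = (AugLag K f h g ct (z (k₀ + 1)) (p (k₀ + 1))
      - AugLag K f h g ct (z k) (p k)) / ((k : ℝ) - (k₀ : ℝ) - 1))
    (Rφ : ℝ) (hRφ : Rφ = sInf ((fun u => f u + h u) '' {u | u ∈ H ∧ g u ∈ -K})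
      - sInf ((fun u => f u + h u) '' H) + Dh ^ 2 / lam) :
    -- conclusions
    (∃ j : ℕ, k₀ + 2 ≤ j ∧ j ≤ k ∧
      ‖v j + z (j - 1) - z j‖ ^ 2 ≤ (2 * lam / (1 - σ ^ 2)) * (Δ + 4 * C ^ 2 / ct)) ∧
    Δ ≤ (Rφ + 9 * C ^ 2 / (2 * ct)) / ((k : ℝ) - (k₀ : ℝ) - 1) :=
  cycle_residual_bounds_general K hKne hKcl hKcvx hKcone H h Kh Dh hHcpt hhlip hDh f f' Lf hLf
    hfdiff g Lg hLg Bg0 Bg1 hBg0 hFne lam σ ct hlam hσ0 hσ1 hct k₀ k hk z p v ε hzH hε hv hvineq hp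
    C hpC Δ hΔ Rφ hRφ
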